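/- arXiv:1509.04388 — 7 statements merged into one kernel-verified Lean document; each statement's English description precedes it below -/
import Mathlib

section
/- Fix σ₀² > 0, η₀² ≥ 0 and λ_1 ≥ ... ≥ λ_n ≥ 0. Define H₀(η²) = (σ₀²/n)Σ_i λ_i(η₀²λ_i+1)/(η²λ_i+1)² − σ₀² · ((1/n)Σ_i λ_i/(η²λ_i+1)) · ((1/n)Σ_i (η₀²λ_i+1)/(η²λ_i+1)). Then for every η² ≥ 0, H₀(η²) = (σ₀²/(2n²)) Σ_{i,j} (η₀² − η²)(λ_i − λ_j)² / ((η²λ_i+1)²(η²λ_j+1)²). -/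
/-!
Write `g i`, `p i`, `q i` for the summands of the three sums on the left. Each summand on the
right splits as `g i + g j - (p i * q j + p j * q i)`, and summing over all pairs gives
`2 n ∑ g - 2 (∑ p) (∑ q)`, which is `2 n²/σ₀²` times the left-hand side.
-/

open Finset

theorem sum_sum_add_sub_mul_add_mul {ι R : Type*} [Fintype ι] [CommRing R] (g p q : ι → R) :
    ∑ i, ∑ j, (g i + g j - (p i * q j + p j * q i))
      = 2 * (Fintype.card ι * ∑ i, g i) - 2 * ((∑ i, p i) * ∑ i, q i) := by
  simp only [sum_sub_distrib, sum_add_distrib, sum_const, card_univ, nsmul_eq_mul, ← mul_sum,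
    ← sum_mul]
  ring

theorem div_sq_mul_sq_eq_add_sub {K : Type*} [Field K] (η₀ η a b : K)
    (ha : η * a + 1 ≠ 0) (hb : η * b + 1 ≠ 0) :
    (η₀ - η) * (a - b) ^ 2 / ((η * a + 1) ^ 2 * (η * b + 1) ^ 2)
      = a * (η₀ * a + 1) / (η * a + 1) ^ 2 + b * (η₀ * b + 1) / (η * b + 1) ^ 2
        - (a / (η * a + 1) * ((η₀ * b + 1) / (η * b + 1))
          + b / (η * b + 1) * ((η₀ * a + 1) / (η * a + 1))) := by
  field_simp
  ring

theorem stmt3_general {n : ℕ} (hn : 0 < n) (σ0sq η0sq : ℝ)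
    (lam : Fin n → ℝ) (hnn : ∀ i, 0 ≤ lam i)
    (ηsq : ℝ) (hη : 0 ≤ ηsq) :
    (σ0sq / n) * ∑ i, lam i * (η0sq * lam i + 1) / (ηsq * lam i + 1) ^ 2
      - σ0sq * ((1 / (n : ℝ)) * ∑ i, lam i / (ηsq * lam i + 1))
          * ((1 / (n : ℝ)) * ∑ i, (η0sq * lam i + 1) / (ηsq * lam i + 1))
    = (σ0sq / (2 * (n : ℝ) ^ 2)) * ∑ i, ∑ j,
        (η0sq - ηsq) * (lam i - lam j) ^ 2
          / ((ηsq * lam i + 1) ^ 2 * (ηsq * lam j + 1) ^ 2) := by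
  have hd : ∀ i, ηsq * lam i + 1 ≠ 0 := fun i =>
    (add_pos_of_nonneg_of_pos (mul_nonneg hη (hnn i)) one_pos).ne'
  simp_rw [fun i j => div_sq_mul_sq_eq_add_sub η0sq ηsq _ _ (hd i) (hd j),
    sum_sum_add_sub_mul_add_mul, Fintype.card_fin]
  have hn' : (n : ℝ) ≠ 0 := by positivity
  have rescale : ∀ G P Q : ℝ, σ0sq / n * G - σ0sq * (1 / n * P) * (1 / n * Q)
      = σ0sq / (2 * n ^ 2) * (2 * (n * G) - 2 * (P * Q)) := by
    intro G P Q
    field_simp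
  exact rescale _ _ _

/-- Closed form for the expected profile score `H₀(η²)` in a linear random-effects model. -/
theorem stmt3 {n : ℕ} (hn : 0 < n) (σ0sq η0sq : ℝ) (hσ : 0 < σ0sq) (hη0 : 0 ≤ η0sq)
    (lam : Fin n → ℝ) (hdec : Antitone lam) (hnn : ∀ i, 0 ≤ lam i)
    (ηsq : ℝ) (hη : 0 ≤ ηsq) :
    (σ0sq / n) * ∑ i, lam i * (η0sq * lam i + 1) / (ηsq * lam i + 1) ^ 2
      - σ0sq * ((1 / (n : ℝ)) * ∑ i, lam i / (ηsq * lam i + 1))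
          * ((1 / (n : ℝ)) * ∑ i, (η0sq * lam i + 1) / (ηsq * lam i + 1))
    = (σ0sq / (2 * (n : ℝ) ^ 2)) * ∑ i, ∑ j,
        (η0sq - ηsq) * (lam i - lam j) ^ 2
          / ((ηsq * lam i + 1) ^ 2 * (ηsq * lam j + 1) ^ 2) :=
  stmt3_general hn σ0sq η0sq lam hnn ηsq hη
end

section
/- Under the setup of the previous identity, |H₀(η²)| ≥ σ₀² |η₀² − η²| 𝔳(Λ) / (η²λ_1 + 1)⁴, where 𝔳(Λ) = (1/n)Σ λ_i² − ((1/n)Σ λ_i)² and λ_1 = max_i λ_i. -/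
/-! Factoring out `η₀² − η²` leaves a double sum of `(λᵢ − λⱼ)²` with weights
`(η²λᵢ + 1)⁻²(η²λⱼ + 1)⁻²`. Since `λ₁` is the largest `λᵢ`, every weight is at least
`(η²λ₁ + 1)⁻⁴`, and the unweighted double sum `∑ᵢ ∑ⱼ (λᵢ − λⱼ)²` equals `2n² 𝔳(Λ)`. -/

open Finset

theorem Finset.sum_sum_sub_sq {ι R : Type*} [CommRing R] (s : Finset ι) (f : ι → R) :
    ∑ i ∈ s, ∑ j ∈ s, (f i - f j) ^ 2 = 2 * (#s * ∑ i ∈ s, f i ^ 2 - (∑ i ∈ s, f i) ^ 2) := by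
  simp only [sub_sq, sum_add_distrib, sum_sub_distrib, ← mul_sum, ← sum_mul, sum_const,
    nsmul_eq_mul]
  ring

theorem Finset.mean_sq_sub_sq_mean {ι K : Type*} [Field K] [CharZero K] {s : Finset ι}
    (hs : s.Nonempty) (f : ι → K) :
    1 / (#s : K) * ∑ i ∈ s, f i ^ 2 - (1 / (#s : K) * ∑ i ∈ s, f i) ^ 2
      = (∑ i ∈ s, ∑ j ∈ s, (f i - f j) ^ 2) / (2 * (#s : K) ^ 2) := by
  have : (#s : K) ≠ 0 := Nat.cast_ne_zero.mpr hs.card_pos.ne'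
  rw [sum_sum_sub_sq]
  field_simp

theorem Finset.sum_sum_div_pow_four_le_sum_sum_div_sq_mul_sq {ι : Type*} (s : Finset ι)
    {a : ι → ι → ℝ} (ha : ∀ i j, 0 ≤ a i j) {w : ι → ℝ} {W : ℝ} (hw : ∀ i, 0 < w i)
    (hwW : ∀ i, w i ≤ W) :
    (∑ i ∈ s, ∑ j ∈ s, a i j) / W ^ 4 ≤ ∑ i ∈ s, ∑ j ∈ s, a i j / (w i ^ 2 * w j ^ 2) := by
  simp only [sum_div]
  gcongr with i _ j _
  · exact ha i j
  · exact mul_pos (pow_pos (hw i) 2) (pow_pos (hw j) 2)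
  · calc
      w i ^ 2 * w j ^ 2 ≤ W ^ 2 * W ^ 2 := by
        gcongr
        exacts [(hw i).le, hwW i, (hw j).le, hwW j]
      _ = W ^ 4 := by ring

theorem stmt4_general {n : ℕ} (hn : 0 < n) (σ0sq η0sq : ℝ)
    (lam : Fin n → ℝ) (hdec : Antitone lam) (hnn : ∀ i, 0 ≤ lam i)
    (ηsq : ℝ) (hη : 0 ≤ ηsq) :
    |(σ0sq / (2 * (n : ℝ) ^ 2)) * ∑ i, ∑ j,
        (η0sq - ηsq) * (lam i - lam j) ^ 2
          / ((ηsq * lam i + 1) ^ 2 * (ηsq * lam j + 1) ^ 2)|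
      ≥ σ0sq * |η0sq - ηsq|
          * ((1 / (n : ℝ)) * ∑ i, (lam i) ^ 2 - ((1 / (n : ℝ)) * ∑ i, lam i) ^ 2)
          / (ηsq * lam ⟨0, hn⟩ + 1) ^ 4 := by
  set d : Fin n → ℝ := fun i => ηsq * lam i + 1
  have hd_pos (i : Fin n) : 0 < d i := by
    have := mul_nonneg hη (hnn i)
    simp only [d]
    linarith
  have hd_le (i : Fin n) : d i ≤ d ⟨0, hn⟩ :=
    add_le_add_left (mul_le_mul_of_nonneg_left (hdec (show ⟨0, hn⟩ ≤ i from Nat.zero_le _)) hη) 1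
  have hweights := univ.sum_sum_div_pow_four_le_sum_sum_div_sq_mul_sq
    (fun i j => sq_nonneg (lam i - lam j)) hd_pos hd_le
  have hvar := mean_sq_sub_sq_mean (univ_nonempty_iff.mpr ⟨⟨0, hn⟩⟩) lam
  rw [card_univ, Fintype.card_fin] at hvar
  simp_rw [hvar, mul_div_assoc, ← mul_sum, abs_mul]
  calc
    σ0sq * |η0sq - ηsq| * ((∑ i, ∑ j, (lam i - lam j) ^ 2) / (2 * n ^ 2) / d ⟨0, hn⟩ ^ 4)
      = σ0sq / (2 * n ^ 2)
          * (|η0sq - ηsq| * ((∑ i, ∑ j, (lam i - lam j) ^ 2) / d ⟨0, hn⟩ ^ 4)) := by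
        ring
    _ ≤ |σ0sq / (2 * n ^ 2)|
          * (|η0sq - ηsq| * |∑ i, ∑ j, (lam i - lam j) ^ 2 / (d i ^ 2 * d j ^ 2)|) := by
        gcongr
        · exact le_abs_self _
        · exact hweights.trans (le_abs_self _)

/-- Lower bound `|H₀(η²)| ≥ σ₀² |η₀² − η²| 𝔳(Λ) / (η²λ₁ + 1)⁴`. -/
theorem stmt4 {n : ℕ} (hn : 0 < n) (σ0sq η0sq : ℝ) (hσ : 0 < σ0sq) (hη0 : 0 ≤ η0sq)
    (lam : Fin n → ℝ) (hdec : Antitone lam) (hnn : ∀ i, 0 ≤ lam i)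
    (ηsq : ℝ) (hη : 0 ≤ ηsq) :
    |(σ0sq / (2 * (n : ℝ) ^ 2)) * ∑ i, ∑ j,
        (η0sq - ηsq) * (lam i - lam j) ^ 2
          / ((ηsq * lam i + 1) ^ 2 * (ηsq * lam j + 1) ^ 2)|
      ≥ σ0sq * |η0sq - ηsq|
          * ((1 / (n : ℝ)) * ∑ i, (lam i) ^ 2 - ((1 / (n : ℝ)) * ∑ i, lam i) ^ 2)
          / (ηsq * lam ⟨0, hn⟩ + 1) ^ 4 :=
  stmt4_general hn σ0sq η0sq lam hdec hnn ηsq hη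
end

section
/- Fix nonnegative reals λ_1,...,λ_n and index i. Define g_i(u) = (1/n) Σ_j u³(λ_i − λ_j)/((λ_i + u)²(λ_j + u)) for u > 0. Then for all u, v ∈ (0,1], |g_i(u) − g_i(v)| ≤ 24|u − v|. -/
lemma phi_lip (a b u v : ℝ) (ha : 0 ≤ a) (hb : 0 ≤ b)
    (hu : u ∈ Set.Ioc (0:ℝ) 1) (hv : v ∈ Set.Ioc (0:ℝ) 1) :
    |u^3/((a+u)*(b+u)) - v^3/((a+v)*(b+v))| ≤ 8 * |u - v| := by
  obtain ⟨hu0, hu1⟩ := hu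
  obtain ⟨hv0, hv1⟩ := hv
  have hau : 0 < a + u := by linarith
  have hbu : 0 < b + u := by linarith
  have hav : 0 < a + v := by linarith
  have hbv : 0 < b + v := by linarith
  have hD : 0 < (a+u)*(b+u)*((a+v)*(b+v)) := by positivity
  have key : u^3/((a+u)*(b+u)) - v^3/((a+v)*(b+v))
      = (u - v) * ((a*b*(u^2+u*v+v^2) + (a+b)*(u*v*(u+v)) + u^2*v^2)
        / ((a+u)*(b+u)*((a+v)*(b+v)))) := by
    field_simp
    ring
  rw [key, abs_mul]
  have hN : 0 ≤ a*b*(u^2+u*v+v^2) + (a+b)*(u*v*(u+v)) + u^2*v^2 := by positivity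
  have hfrac : |(a*b*(u^2+u*v+v^2) + (a+b)*(u*v*(u+v)) + u^2*v^2)
      / ((a+u)*(b+u)*((a+v)*(b+v)))| ≤ 8 := by
    rw [abs_of_nonneg (div_nonneg hN hD.le), div_le_iff₀ hD]
    have h1 : u*u*a*b ≤ (a+u)*(b+u)*(a+v)*(b+v) := by gcongr <;> linarith
    have h2 : u*b*a*v ≤ (a+u)*(b+u)*(a+v)*(b+v) := by gcongr <;> linarith
    have h3 : a*b*v*v ≤ (a+u)*(b+u)*(a+v)*(b+v) := by gcongr <;> linarith
    have h4 : u*u*a*v ≤ (a+u)*(b+u)*(a+v)*(b+v) := by gcongr <;> linarith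
    have h5 : u*u*v*b ≤ (a+u)*(b+u)*(a+v)*(b+v) := by gcongr <;> linarith
    have h6 : a*u*v*v ≤ (a+u)*(b+u)*(a+v)*(b+v) := by gcongr <;> linarith
    have h7 : u*b*v*v ≤ (a+u)*(b+u)*(a+v)*(b+v) := by gcongr <;> linarith
    have h8 : u*u*v*v ≤ (a+u)*(b+u)*(a+v)*(b+v) := by gcongr <;> linarith
    nlinarith [h1, h2, h3, h4, h5, h6, h7, h8]
  calc |u - v| * |(a*b*(u^2+u*v+v^2) + (a+b)*(u*v*(u+v)) + u^2*v^2)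
      / ((a+u)*(b+u)*((a+v)*(b+v)))| ≤ |u - v| * 8 :=
        mul_le_mul_of_nonneg_left hfrac (abs_nonneg _)
    _ = 8 * |u - v| := by ring

lemma term_lip (a b u v : ℝ) (ha : 0 ≤ a) (hb : 0 ≤ b)
    (hu : u ∈ Set.Ioc (0:ℝ) 1) (hv : v ∈ Set.Ioc (0:ℝ) 1) :
    |u^3*(a-b)/((a+u)^2*(b+u)) - v^3*(a-b)/((a+v)^2*(b+v))| ≤ 16 * |u - v| := by
  have hau : 0 < a + u := by linarith [hu.1]
  have hbu : 0 < b + u := by linarith [hu.1]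
  have hav : 0 < a + v := by linarith [hv.1]
  have hbv : 0 < b + v := by linarith [hv.1]
  have idu : u^3*(a-b)/((a+u)^2*(b+u)) = u^3/((a+u)*(b+u)) - u^3/((a+u)*(a+u)) := by
    field_simp
    ring
  have idv : v^3*(a-b)/((a+v)^2*(b+v)) = v^3/((a+v)*(b+v)) - v^3/((a+v)*(a+v)) := by
    field_simp
    ring
  rw [idu, idv]
  have e : u^3/((a+u)*(b+u)) - u^3/((a+u)*(a+u))
      - (v^3/((a+v)*(b+v)) - v^3/((a+v)*(a+v)))
      = (u^3/((a+u)*(b+u)) - v^3/((a+v)*(b+v)))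
        - (u^3/((a+u)*(a+u)) - v^3/((a+v)*(a+v))) := by ring
  rw [e]
  have h1 := phi_lip a b u v ha hb hu hv
  have h2 := phi_lip a a u v ha ha hu hv
  calc |(u^3/((a+u)*(b+u)) - v^3/((a+v)*(b+v)))
        - (u^3/((a+u)*(a+u)) - v^3/((a+v)*(a+v)))|
      ≤ |u^3/((a+u)*(b+u)) - v^3/((a+v)*(b+v))|
        + |u^3/((a+u)*(a+u)) - v^3/((a+v)*(a+v))| := abs_sub _ _
    _ ≤ 8 * |u - v| + 8 * |u - v| := add_le_add h1 h2
    _ = 16 * |u - v| := by ring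

/-- Lipschitz bound for `g_i(u) = (1/n) Σ_j u³(λ_i − λ_j)/((λ_i + u)²(λ_j + u))` on `(0,1]`. -/
theorem stmt8 {n : ℕ} (hn : 0 < n) (lam : Fin n → ℝ) (hnn : ∀ i, 0 ≤ lam i)
    (i : Fin n) (u v : ℝ)
    (hu : u ∈ Set.Ioc (0 : ℝ) 1) (hv : v ∈ Set.Ioc (0 : ℝ) 1) :
    |(1 / (n : ℝ)) * ∑ j, u ^ 3 * (lam i - lam j) / ((lam i + u) ^ 2 * (lam j + u))
      - (1 / (n : ℝ)) * ∑ j, v ^ 3 * (lam i - lam j) / ((lam i + v) ^ 2 * (lam j + v))|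
      ≤ 24 * |u - v| := by
  have hn' : (0:ℝ) < n := by exact_mod_cast hn
  rw [← mul_sub, ← Finset.sum_sub_distrib, abs_mul]
  have h1n : |(1 / (n:ℝ))| = 1 / n := abs_of_pos (by positivity)
  rw [h1n]
  have hsum : |∑ j, (u ^ 3 * (lam i - lam j) / ((lam i + u) ^ 2 * (lam j + u))
      - v ^ 3 * (lam i - lam j) / ((lam i + v) ^ 2 * (lam j + v)))|
      ≤ ∑ _j : Fin n, 16 * |u - v| := by
    refine (Finset.abs_sum_le_sum_abs _ _).trans (Finset.sum_le_sum fun j _ => ?_)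
    exact term_lip (lam i) (lam j) u v (hnn i) (hnn j) hu hv
  have : (∑ _j : Fin n, 16 * |u - v|) = n * (16 * |u - v|) := by
    simp [Finset.sum_const, Finset.card_univ, mul_comm]
  rw [this] at hsum
  calc (1 / (n:ℝ)) * |∑ j, (u ^ 3 * (lam i - lam j) / ((lam i + u) ^ 2 * (lam j + u))
        - v ^ 3 * (lam i - lam j) / ((lam i + v) ^ 2 * (lam j + v)))|
      ≤ (1 / (n:ℝ)) * ((n:ℝ) * (16 * |u - v|)) := by
        exact mul_le_mul_of_nonneg_left hsum (by positivity)
    _ = 16 * |u - v| := by field_simp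
    _ ≤ 24 * |u - v| := by nlinarith [abs_nonneg (u - v)]
end

section
/- Let σ₀² > 0, η₀² ≥ 0, λ_1 ≥ ... ≥ λ_n ≥ 0, and define σ₀²(η²) = (σ₀²/n) Σ_i (η₀²λ_i + 1)/(η²λ_i + 1). Then for all η², η₀² ≥ 0, |σ₀²(η²) − σ₀²(η₀²)| ≤ σ₀² λ_1 |η² − η₀²|. -/
/-!
Each summand of `σ₀²(η²)` differs from `1 = (η₀²λᵢ + 1)/(η₀²λᵢ + 1)` by
`(η₀² − η²)λᵢ / (η²λᵢ + 1)`, whose denominator is at least `1`; this difference is at most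
`λᵢ |η² − η₀²| ≤ λ₁ |η² − η₀²|` in absolute value, and averaging preserves the bound.
-/

open Finset

theorem abs_div_one_add_mul_sub_one_le {a b x : ℝ} (ha : 0 ≤ a) (hx : 0 ≤ x) :
    |(b * x + 1) / (a * x + 1) - 1| ≤ x * |a - b| := by
  have hden : 1 ≤ a * x + 1 := le_add_of_nonneg_left (mul_nonneg ha hx)
  have hdiff : (b * x + 1) / (a * x + 1) - 1 = (b - a) * x / (a * x + 1) := by
    field_simp
    ring
  calc |(b * x + 1) / (a * x + 1) - 1|
      = |(b - a) * x| / (a * x + 1) := by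
        rw [hdiff, abs_div, abs_of_pos (zero_lt_one.trans_le hden)]
    _ ≤ |(b - a) * x| := div_le_self (abs_nonneg _) hden
    _ = x * |a - b| := by rw [abs_mul, abs_of_nonneg hx, abs_sub_comm, mul_comm]

theorem abs_const_div_card_mul_sum_sub_le {ι : Type*} [Fintype ι] {f g : ι → ℝ} {c M : ℝ}
    (hc : 0 ≤ c) (hM : 0 ≤ M) (hfg : ∀ i, |f i - g i| ≤ M) :
    |c / Fintype.card ι * ∑ i, f i - c / Fintype.card ι * ∑ i, g i| ≤ c * M := by
  have hsum : |∑ i, (f i - g i)| ≤ Fintype.card ι * M :=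
    calc |∑ i, (f i - g i)| ≤ ∑ i, |f i - g i| := abs_sum_le_sum_abs _ _
      _ ≤ Fintype.card ι * M := by
        simpa using sum_le_card_nsmul univ _ M fun i _ => hfg i
  rw [← mul_sub, ← sum_sub_distrib, abs_mul, abs_of_nonneg (by positivity)]
  rcases (Fintype.card ι).eq_zero_or_pos with hcard | hcard
  · simp [hcard, mul_nonneg hc hM]
  · calc c / Fintype.card ι * |∑ i, (f i - g i)|
        ≤ c / Fintype.card ι * (Fintype.card ι * M) := by gcongr
      _ = c * M := by field_simp

/-- Lipschitz continuity of `η² ↦ σ₀²(η²)`: `|σ₀²(η²) − σ₀²(η₀²)| ≤ σ₀² λ₁ |η² − η₀²|`. -/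
theorem stmt9 {n : ℕ} (hn : 0 < n) (σ0sq η0sq : ℝ) (hσ : 0 < σ0sq) (hη0 : 0 ≤ η0sq)
    (lam : Fin n → ℝ) (hdec : Antitone lam) (hnn : ∀ i, 0 ≤ lam i)
    (ηsq : ℝ) (hη : 0 ≤ ηsq) :
    |(σ0sq / n) * ∑ i, (η0sq * lam i + 1) / (ηsq * lam i + 1)
      - (σ0sq / n) * ∑ i, (η0sq * lam i + 1) / (η0sq * lam i + 1)|
      ≤ σ0sq * lam ⟨0, hn⟩ * |ηsq - η0sq| := by
  have hlam_le : ∀ i, lam i ≤ lam ⟨0, hn⟩ := fun i => hdec (Nat.zero_le i)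
  have hone : ∀ i, (η0sq * lam i + 1) / (η0sq * lam i + 1) = 1 := fun i =>
    div_self (by have := hnn i; positivity)
  have hterm : ∀ i, |(η0sq * lam i + 1) / (ηsq * lam i + 1) - 1|
      ≤ lam ⟨0, hn⟩ * |ηsq - η0sq| := fun i =>
    (abs_div_one_add_mul_sub_one_le hη (hnn i)).trans
      (mul_le_mul_of_nonneg_right (hlam_le i) (abs_nonneg _))
  have hmean := abs_const_div_card_mul_sum_sub_le (g := fun _ => 1) hσ.le
    (mul_nonneg (hnn _) (abs_nonneg _)) hterm
  rw [Fintype.card_fin] at hmean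
  rw [sum_congr rfl fun i _ => hone i, mul_assoc]
  exact hmean
end

section
/- Let λ_1 ≥ ... ≥ λ_n > 0, η₀² ≥ 0, σ₀² > 0. Define ℓ₀(η²) = −(1/2)log(σ₀²(η²)) − (1/(2n)) Σ_i log(η²λ_i + 1) − (1/2)log(σ₀²) − 1/2, where σ₀²(η²) = (σ₀²/n) Σ_i (η₀²λ_i+1)/(η²λ_i+1). Then for all η² ≥ 0, ℓ₀(η₀²) − ℓ₀(η²) ≥ (η² − η₀²)² 𝔳(Λ) / (2(|η² − η₀²| + 1)² (η₀²+1)⁴ (λ_1+1)⁶ (λ_n^{−1}+1)²), where 𝔳(Λ) = (1/n)Σλ_i² − ((1/n)Σλ_i)². -/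
/-!
Write `r i = (η₀² λᵢ + 1) / (η² λᵢ + 1)`. Then `ℓ₀(η₀²) - ℓ₀(η²)` is half the Jensen gap
`log (𝔼 r) - 𝔼 (log r)`. Since `log t ≤ t - 1 - (√t - 1)²`, this gap is at least `Var r / (4 R²)`
for every upper bound `R` of the `rᵢ`, and `R = (η₀² + λₙ⁻¹) λ₁ / (η² λ₁ + 1)` is one. Finally
`rᵢ - rⱼ = (η₀² - η²)(λᵢ - λⱼ) / ((η² λᵢ + 1)(η² λⱼ + 1))` bounds `Var r` below by a multiple of
`𝔳(Λ)`.
-/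

open Real Finset
open scoped BigOperators

/-- Strong concavity of `log` on `(0, R]`; it follows from `log t ≤ t - 1` at `t = √(x / c)`. -/
theorem Real.log_le_log_add_sub_div_sub_sq {x c R : ℝ} (hx : 0 < x) (hc : 0 < c)
    (hxR : x ≤ R) (hcR : c ≤ R) :
    log x ≤ log c + (x - c) / c - (x - c) ^ 2 / (4 * R ^ 2) := by
  obtain ⟨u, hu, rfl⟩ : ∃ u, 0 < u ∧ u ^ 2 = x := ⟨√x, sqrt_pos.2 hx, sq_sqrt hx.le⟩
  obtain ⟨v, hv, rfl⟩ : ∃ v, 0 < v ∧ v ^ 2 = c := ⟨√c, sqrt_pos.2 hc, sq_sqrt hc.le⟩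
  have hR : 0 < R := hc.trans_le hcR
  have hlog : log (u ^ 2) - log (v ^ 2) ≤ 2 * ((u - v) / v) := by
    rw [← log_div (by positivity) (by positivity), ← div_pow, log_pow]
    have := log_le_sub_one_of_pos (div_pos hu hv)
    rw [div_sub_one hv.ne'] at this
    push_cast; linarith
  have huv : u * v ≤ R := by nlinarith
  have hsq : (u ^ 2 - v ^ 2) ^ 2 / (4 * R ^ 2) ≤ (u - v) ^ 2 / v ^ 2 := by
    rw [div_le_div_iff₀ (by positivity) (by positivity)]
    have : (u * v + v ^ 2) ^ 2 ≤ (2 * R) ^ 2 := by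
      apply pow_le_pow_left₀ (by positivity); linarith
    nlinarith [sq_nonneg (u - v)]
  have key : 2 * ((u - v) / v) = (u ^ 2 - v ^ 2) / v ^ 2 - (u - v) ^ 2 / v ^ 2 := by
    field_simp; ring
  linarith

noncomputable def empiricalVariance {ι : Type*} [Fintype ι] (x : ι → ℝ) : ℝ :=
  𝔼 i, x i ^ 2 - (𝔼 i, x i) ^ 2

section
variable {ι : Type*} [Fintype ι]

theorem empiricalVariance_eq_expect_sq_sub [Nonempty ι] (x : ι → ℝ) :
    empiricalVariance x = 𝔼 i, (x i - 𝔼 j, x j) ^ 2 := by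
  simp only [empiricalVariance, sub_sq, expect_add_distrib, expect_sub_distrib, ← expect_mul,
    ← mul_expect, Fintype.expect_const]
  ring

theorem empiricalVariance_nonneg [Nonempty ι] (x : ι → ℝ) : 0 ≤ empiricalVariance x := by
  rw [empiricalVariance_eq_expect_sq_sub]
  exact expect_nonneg fun i _ => sq_nonneg _

theorem empiricalVariance_eq_expect_expect_sq_sub [Nonempty ι] (x : ι → ℝ) :
    empiricalVariance x = (𝔼 i, 𝔼 j, (x i - x j) ^ 2) / 2 := by
  simp only [empiricalVariance, sub_sq, expect_add_distrib, expect_sub_distrib, ← expect_mul,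
    ← mul_expect, Fintype.expect_const]
  ring

theorem mul_empiricalVariance_le [Nonempty ι] {x y : ι → ℝ} {c : ℝ}
    (h : ∀ i j, c * (x i - x j) ^ 2 ≤ (y i - y j) ^ 2) :
    c * empiricalVariance x ≤ empiricalVariance y := by
  simp only [empiricalVariance_eq_expect_expect_sq_sub, mul_div_assoc', mul_expect]
  gcongr with i _ j _
  exact h i j

theorem empiricalVariance_eq_sum (x : ι → ℝ) :
    empiricalVariance x = 1 / (Fintype.card ι : ℝ) * ∑ i, x i ^ 2
      - (1 / (Fintype.card ι : ℝ) * ∑ i, x i) ^ 2 := by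
  simp [empiricalVariance, Fintype.expect_eq_sum_div_card, div_eq_inv_mul]

theorem empiricalVariance_div_le_log_expect_sub_expect_log [Nonempty ι] {r : ι → ℝ} {R : ℝ}
    (hr : ∀ i, 0 < r i) (hrR : ∀ i, r i ≤ R) :
    empiricalVariance r / (4 * R ^ 2) ≤ log (𝔼 i, r i) - 𝔼 i, log (r i) := by
  set m := 𝔼 i, r i
  have hm : 0 < m := expect_pos (fun i _ => hr i) univ_nonempty
  have hmR : m ≤ R := expect_le univ_nonempty fun i _ => hrR i
  have key : 𝔼 i, log (r i) ≤ 𝔼 i, (log m + (r i - m) / m - (r i - m) ^ 2 / (4 * R ^ 2)) :=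
    expect_le_expect fun i _ =>
      Real.log_le_log_add_sub_div_sub_sq (hr i) hm (hrR i) hmR
  rw [expect_sub_distrib, expect_add_distrib, Fintype.expect_const, ← expect_div, ← expect_div,
    expect_sub_distrib, Fintype.expect_const, sub_self, zero_div,
    ← empiricalVariance_eq_expect_sq_sub] at key
  linarith
end

noncomputable def varianceRatio (η0sq ηsq x : ℝ) : ℝ := (η0sq * x + 1) / (ηsq * x + 1)

section
variable {η0sq ηsq : ℝ}

theorem varianceRatio_pos (hη0 : 0 ≤ η0sq) (hη : 0 ≤ ηsq) {x : ℝ} (hx : 0 ≤ x) :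
    0 < varianceRatio η0sq ηsq x := by
  unfold varianceRatio; positivity

theorem varianceRatio_sub_varianceRatio {x y : ℝ} (hx : ηsq * x + 1 ≠ 0) (hy : ηsq * y + 1 ≠ 0) :
    varianceRatio η0sq ηsq x - varianceRatio η0sq ηsq y
      = (η0sq - ηsq) * (x - y) / ((ηsq * x + 1) * (ηsq * y + 1)) := by
  unfold varianceRatio
  rw [div_sub_div _ _ hx hy]
  ring

theorem mul_sq_sub_le_sq_varianceRatio_sub (hη : 0 ≤ ηsq) {x y L : ℝ} (hx : 0 ≤ x) (hy : 0 ≤ y)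
    (hxL : x ≤ L) (hyL : y ≤ L) :
    (ηsq - η0sq) ^ 2 / (ηsq * L + 1) ^ 4 * (x - y) ^ 2
      ≤ (varianceRatio η0sq ηsq x - varianceRatio η0sq ηsq y) ^ 2 := by
  have hbx : 0 < ηsq * x + 1 := by positivity
  have hby : 0 < ηsq * y + 1 := by positivity
  have hxy : (ηsq * x + 1) * (ηsq * y + 1) ≤ (ηsq * L + 1) ^ 2 := by
    have : 0 ≤ L := hx.trans hxL
    rw [sq]; gcongr
  rw [varianceRatio_sub_varianceRatio hbx.ne' hby.ne', div_pow, div_mul_eq_mul_div, mul_pow,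
    ← neg_sub ηsq, neg_sq, show (ηsq * L + 1) ^ 4 = ((ηsq * L + 1) ^ 2) ^ 2 by ring]
  gcongr

theorem varianceRatio_le (hη0 : 0 ≤ η0sq) (hη : 0 ≤ ηsq) {x l L : ℝ} (hl : 0 < l) (hlx : l ≤ x)
    (hxL : x ≤ L) :
    varianceRatio η0sq ηsq x ≤ (η0sq + l⁻¹) * L / (ηsq * L + 1) := by
  have hx : 0 < x := hl.trans_le hlx
  have hL0 : 0 < L := hx.trans_le hxL
  have hxl : 1 ≤ x * l⁻¹ := by rw [← div_eq_mul_inv]; exact (one_le_div hl).2 hlx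
  unfold varianceRatio
  rw [div_le_div_iff₀ (by positivity) (by positivity)]
  have hL : 1 ≤ L * l⁻¹ := hxl.trans (by gcongr)
  nlinarith [mul_le_mul_of_nonneg_left hxL hη0,
    mul_le_mul_of_nonneg_left hxl (mul_nonneg hη hx.le), mul_nonneg hη0 hη,
    mul_le_mul_of_nonneg_left hxL (mul_nonneg hη0 hη)]

end

noncomputable def profileLogLik {ι : Type*} [Fintype ι] (σ0sq η0sq : ℝ) (lam : ι → ℝ)
    (ηsq : ℝ) : ℝ :=
  -(1 / 2) * log ((σ0sq / Fintype.card ι) * ∑ i, (η0sq * lam i + 1) / (ηsq * lam i + 1))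
    - (1 / (2 * (Fintype.card ι : ℝ))) * ∑ i, log (ηsq * lam i + 1) - (1 / 2) * log σ0sq - 1 / 2

theorem profileLogLik_sub_eq {ι : Type*} [Fintype ι] [Nonempty ι] {σ0sq η0sq ηsq : ℝ}
    {lam : ι → ℝ} (hσ : 0 < σ0sq) (hη0 : 0 ≤ η0sq) (hη : 0 ≤ ηsq) (hlam : ∀ i, 0 ≤ lam i) :
    profileLogLik σ0sq η0sq lam η0sq - profileLogLik σ0sq η0sq lam ηsq
      = (log (𝔼 i, varianceRatio η0sq ηsq (lam i))
          - 𝔼 i, log (varianceRatio η0sq ηsq (lam i))) / 2 := by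
  have hN : (0 : ℝ) < Fintype.card ι := by exact_mod_cast Fintype.card_pos
  have hA : ∀ i, 0 < η0sq * lam i + 1 := fun i => by have := hlam i; positivity
  have hB : ∀ i, 0 < ηsq * lam i + 1 := fun i => by have := hlam i; positivity
  have hm : 0 < 𝔼 i, varianceRatio η0sq ηsq (lam i) :=
    expect_pos (fun i _ => varianceRatio_pos hη0 hη (hlam i)) univ_nonempty
  have hself : ∑ i, (η0sq * lam i + 1) / (η0sq * lam i + 1) = Fintype.card ι := by
    simp [div_self (hA _).ne']
  have hsum : σ0sq / Fintype.card ι * ∑ i, (η0sq * lam i + 1) / (ηsq * lam i + 1)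
      = σ0sq * 𝔼 i, varianceRatio η0sq ηsq (lam i) := by
    rw [Fintype.expect_eq_sum_div_card]; unfold varianceRatio; ring
  have hlog : 𝔼 i, log (varianceRatio η0sq ηsq (lam i))
      = (∑ i, log (η0sq * lam i + 1) - ∑ i, log (ηsq * lam i + 1)) / Fintype.card ι := by
    rw [Fintype.expect_eq_sum_div_card, ← sum_sub_distrib]
    unfold varianceRatio
    simp only [log_div (hA _).ne' (hB _).ne']
  unfold profileLogLik
  rw [hself, div_mul_cancel₀ _ hN.ne', hsum, log_mul hσ.ne' hm.ne', hlog]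
  field_simp
  ring

theorem eight_mul_sq_le {η0sq ηsq L a : ℝ} (hη0 : 0 ≤ η0sq) (hη : 0 ≤ ηsq) (hL : 0 < L)
    (ha : 0 < a) :
    8 * ((η0sq + a) * L * (ηsq * L + 1)) ^ 2
      ≤ 2 * (|ηsq - η0sq| + 1) ^ 2 * (η0sq + 1) ^ 4 * (L + 1) ^ 6 * (a + 1) ^ 2 := by
  have hd := abs_nonneg (ηsq - η0sq)
  have h1 : η0sq + a ≤ (η0sq + 1) * (a + 1) := by nlinarith
  have h2 : ηsq * L + 1 ≤ (|ηsq - η0sq| + 1) * (η0sq + 1) * (L + 1) := by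
    have : ηsq ≤ η0sq + |ηsq - η0sq| := by linarith [le_abs_self (ηsq - η0sq)]
    nlinarith [mul_le_mul_of_nonneg_right this hL.le, mul_nonneg hd hη0,
      mul_nonneg (mul_nonneg hd hη0) hL.le]
  have h3 : 2 * L ≤ (L + 1) ^ 2 := by nlinarith [sq_nonneg (L - 1)]
  calc 8 * ((η0sq + a) * L * (ηsq * L + 1)) ^ 2
      = 2 * (η0sq + a) ^ 2 * (2 * L) ^ 2 * (ηsq * L + 1) ^ 2 := by ring
    _ ≤ 2 * ((η0sq + 1) * (a + 1)) ^ 2 * ((L + 1) ^ 2) ^ 2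
          * ((|ηsq - η0sq| + 1) * (η0sq + 1) * (L + 1)) ^ 2 := by gcongr
    _ = 2 * (|ηsq - η0sq| + 1) ^ 2 * (η0sq + 1) ^ 4 * (L + 1) ^ 6 * (a + 1) ^ 2 := by ring

/-- Quadratic separation of the population profile likelihood at `η₀²` (full-rank case). -/
theorem stmt11 {n : ℕ} (hn : 0 < n) (σ0sq η0sq : ℝ) (hσ : 0 < σ0sq) (hη0 : 0 ≤ η0sq)
    (lam : Fin n → ℝ) (hdec : Antitone lam) (hpos : ∀ i, 0 < lam i)
    (ℓ0 : ℝ → ℝ)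
    (hℓ0 : ∀ ηsq : ℝ, ℓ0 ηsq =
      -(1 / 2) * Real.log ((σ0sq / n) * ∑ i, (η0sq * lam i + 1) / (ηsq * lam i + 1))
        - (1 / (2 * (n : ℝ))) * ∑ i, Real.log (ηsq * lam i + 1)
        - (1 / 2) * Real.log σ0sq - 1 / 2)
    (ηsq : ℝ) (hη : 0 ≤ ηsq) :
    ℓ0 η0sq - ℓ0 ηsq ≥
      (ηsq - η0sq) ^ 2
          * ((1 / (n : ℝ)) * ∑ i, (lam i) ^ 2 - ((1 / (n : ℝ)) * ∑ i, lam i) ^ 2)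
        / (2 * (|ηsq - η0sq| + 1) ^ 2 * (η0sq + 1) ^ 4 * (lam ⟨0, hn⟩ + 1) ^ 6
            * ((lam ⟨n - 1, Nat.sub_lt hn one_pos⟩)⁻¹ + 1) ^ 2) := by
  have : Nonempty (Fin n) := ⟨⟨0, hn⟩⟩
  obtain rfl : ℓ0 = profileLogLik σ0sq η0sq lam := funext fun η => by
    simp [hℓ0, profileLogLik]
  set L := lam ⟨0, hn⟩
  set l := lam ⟨n - 1, Nat.sub_lt hn one_pos⟩
  have hL : ∀ i, lam i ≤ L := fun i => hdec (Nat.zero_le i.1)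
  have hl : ∀ i, l ≤ lam i := fun i => hdec (Nat.le_sub_one_of_lt i.2)
  set r := fun i => varianceRatio η0sq ηsq (lam i)
  set R := (η0sq + l⁻¹) * L / (ηsq * L + 1) with hR
  have hgap : empiricalVariance r / (4 * R ^ 2) ≤ log (𝔼 i, r i) - 𝔼 i, log (r i) :=
    empiricalVariance_div_le_log_expect_sub_expect_log
      (fun i => varianceRatio_pos hη0 hη (hpos i).le)
      (fun i => varianceRatio_le hη0 hη (hpos _) (hl i) (hL i))
  have hvar : (ηsq - η0sq) ^ 2 / (ηsq * L + 1) ^ 4 * empiricalVariance lam ≤ empiricalVariance r :=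
    mul_empiricalVariance_le fun i j =>
      mul_sq_sub_le_sq_varianceRatio_sub hη (hpos i).le (hpos j).le (hL i) (hL j)
  have hnum : 0 ≤ (ηsq - η0sq) ^ 2 * empiricalVariance lam :=
    mul_nonneg (sq_nonneg _) (empiricalVariance_nonneg lam)
  have hLpos : 0 < L := hpos _
  have hlpos : 0 < l⁻¹ := inv_pos.2 (hpos _)
  have hvarΛ := empiricalVariance_eq_sum lam
  rw [Fintype.card_fin] at hvarΛ
  rw [← hvarΛ, ge_iff_le, profileLogLik_sub_eq hσ hη0 hη fun i => (hpos i).le]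
  calc _ ≤ (ηsq - η0sq) ^ 2 * empiricalVariance lam
          / (8 * ((η0sq + l⁻¹) * L * (ηsq * L + 1)) ^ 2) :=
        div_le_div_of_nonneg_left hnum (by positivity) (eight_mul_sq_le hη0 hη hLpos hlpos)
    _ = (ηsq - η0sq) ^ 2 / (ηsq * L + 1) ^ 4 * empiricalVariance lam / (4 * R ^ 2) / 2 := by
        rw [hR]; field_simp; ring
    _ ≤ empiricalVariance r / (4 * R ^ 2) / 2 := by gcongr
    _ ≤ _ := by gcongr
end

section
/- Let x_1,...,x_n > 0 with common mean m = (1/n)Σ x_j and suppose h > 0 satisfies h ≥ max(x_j, m) for all j. Then (1/n) Σ_j log(x_j) ≤ log(m) − (1/(2h²)) · ((1/n) Σ_j (x_j − m)²). -/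
/-!
On `(0, h]` the function `t ↦ log t + t ^ 2 / (2 h ^ 2)` is concave, its second derivative being
`1 / h ^ 2 - 1 / t ^ 2 ≤ 0`. Jensen's inequality for it with the uniform weights `1 / n` gives the
claim, because the mean of the `x j ^ 2` exceeds `m ^ 2` by exactly the variance.
-/

open Real Finset Set

theorem concaveOn_log_add_sq_div (h : ℝ) :
    ConcaveOn ℝ (Ioc 0 h) (fun t ↦ log t + t ^ 2 / (2 * h ^ 2)) := by
  refine concaveOn_of_hasDerivWithinAt2_nonpos (convex_Ioc 0 h)
    (f' := fun t ↦ t⁻¹ + t / h ^ 2) (f'' := fun t ↦ -(t ^ 2)⁻¹ + 1 / h ^ 2) ?_ ?_ ?_ ?_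
  · exact (continuousOn_log.mono fun t ht ↦ ht.1.ne').add (by fun_prop)
  · intro t ht
    rw [interior_Ioc] at ht
    refine (((hasDerivAt_log ht.1.ne').add
      ((hasDerivAt_pow 2 t).div_const (2 * h ^ 2))).congr_deriv ?_).hasDerivWithinAt
    norm_num
    ring
  · intro t ht
    rw [interior_Ioc] at ht
    exact ((hasDerivAt_inv ht.1.ne').add ((hasDerivAt_id t).div_const (h ^ 2))).hasDerivWithinAt
  · intro t ht
    rw [interior_Ioc] at ht
    have : 1 / h ^ 2 ≤ (t ^ 2)⁻¹ := by
      rw [one_div]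
      exact inv_anti₀ (pow_pos ht.1 2) (pow_le_pow_left₀ ht.1.le ht.2.le 2)
    linarith

theorem inv_card_mul_sum_sub_mean_sq {ι : Type*} [Fintype ι] (x : ι → ℝ) :
    (1 / (Fintype.card ι : ℝ)) * ∑ i, (x i - (1 / (Fintype.card ι : ℝ)) * ∑ j, x j) ^ 2
      = (1 / (Fintype.card ι : ℝ)) * ∑ i, x i ^ 2 - ((1 / (Fintype.card ι : ℝ)) * ∑ j, x j) ^ 2 := by
  rcases eq_or_ne (Fintype.card ι : ℝ) 0 with hc | hc
  · simp [hc]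
  simp only [sub_sq, sum_add_distrib, sum_sub_distrib, ← sum_mul, ← mul_sum, sum_const, card_univ,
    nsmul_eq_mul]
  field_simp
  ring

theorem stmt13_general {n : ℕ} (hn : 0 < n) (x : Fin n → ℝ) (hx : ∀ j, 0 < x j)
    (m : ℝ) (hm : m = (1 / (n : ℝ)) * ∑ j, x j)
    (h : ℝ) (hhx : ∀ j, x j ≤ h) :
    (1 / (n : ℝ)) * ∑ j, Real.log (x j)
      ≤ Real.log m - (1 / (2 * h ^ 2)) * ((1 / (n : ℝ)) * ∑ j, (x j - m) ^ 2) := by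
  have hweights : ∑ _j : Fin n, (1 / (n : ℝ)) = 1 := by
    simp [(Nat.cast_pos.2 hn).ne']
  have jensen := (concaveOn_log_add_sq_div h).le_map_sum (t := univ) (w := fun _ ↦ 1 / (n : ℝ))
    (fun _ _ ↦ by positivity) hweights (fun j _ ↦ ⟨hx j, hhx j⟩)
  have variance := inv_card_mul_sum_sub_mean_sq x
  simp only [smul_eq_mul, ← mul_sum, sum_add_distrib, ← sum_div, ← hm] at jensen
  rw [Fintype.card_fin, ← hm] at variance
  linear_combination jensen + variance / (2 * h ^ 2)

/-- Quantitative Jensen inequality for the logarithm. -/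
theorem stmt13 {n : ℕ} (hn : 0 < n) (x : Fin n → ℝ) (hx : ∀ j, 0 < x j)
    (m : ℝ) (hm : m = (1 / (n : ℝ)) * ∑ j, x j)
    (h : ℝ) (hh : 0 < h) (hhx : ∀ j, x j ≤ h) (hhm : m ≤ h) :
    (1 / (n : ℝ)) * ∑ j, Real.log (x j)
      ≤ Real.log m - (1 / (2 * h ^ 2)) * ((1 / (n : ℝ)) * ∑ j, (x j - m) ^ 2) :=
  stmt13_general hn x hx m hm h hhx
end

section
/- Let ζ and ζ' be exchangeable random vectors constructed as follows: ζ = (ζ_1,...,ζ_d) has independent mean-zero unit-variance components, ζ' replaces a uniformly random coordinate ζ_I by an independent copy ζ'_I. For a d×d symmetric matrix Q with diagonal part Q̌, set w = ζᵀQζ − tr(Q), w̌ = ζᵀQ̌ζ − tr(Q). Then E[w' − w | ζ] = −(2/d) w + (1/d) w̌ and E[w̌' − w̌ | ζ] = −(1/d) w̌. -/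
/-!
Replacing coordinate `k` of `x` by `t` changes `xᵀQx` by `(t - x k) (2 (Q x) k + Q k k (t - x k))`,
a polynomial of degree two in `t` whose coefficients depend on `x` only. On the event `{I = k}`
the new value is `ζ'_k`, and `(I, ζ')` is independent of `ζ`, so conditioning on `ζ` replaces
`1{I = k} ζ'_k ^ n` by its mean `(1/d) E[ζ'_k ^ n] = (1/d) (1, 0, 1)_n`. Summing over `k` gives
`E[w' - w | ζ] = (tr Q + ∑ k, Q k k ζ_k² - 2 ζᵀQζ) / d = -(2/d) w + (1/d) w̌`, and the identity
for `w̌` is the same computation for the diagonal matrix `Q̌`.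
-/

open MeasureTheory ProbabilityTheory Matrix

open scoped ENNReal

namespace Matrix

variable {n R : Type*} [Fintype n] [CommRing R]

def updateCoeff (Q : Matrix n n R) (x : n → R) (k : n) : Fin 3 → R :=
  ![Q k k * x k ^ 2 - 2 * x k * (Q *ᵥ x) k, 2 * ((Q *ᵥ x) k - Q k k * x k), Q k k]

theorem dotProduct_mulVec_update_sub [DecidableEq n] {Q : Matrix n n R} (hQ : Q.IsSymm)
    (x : n → R) (k : n) (t : R) :
    Function.update x k t ⬝ᵥ Q *ᵥ Function.update x k t - x ⬝ᵥ Q *ᵥ x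
      = ∑ i : Fin 3, updateCoeff Q x k i * t ^ (i : ℕ) := by
  have hx : Function.update x k t = x + Pi.single k (t - x k) := by
    rw [Pi.update_eq_sub_add_single, Pi.single_sub]; abel
  have hsymm : x ⬝ᵥ Q *ᵥ Pi.single k (t - x k) = (t - x k) * (Q *ᵥ x) k := by
    rw [dotProduct_mulVec, dotProduct_single, ← mulVec_transpose, hQ.eq, mul_comm]
  rw [hx, mulVec_add, dotProduct_add, add_dotProduct, add_dotProduct, hsymm, single_dotProduct,
    single_dotProduct, mulVec_single, Fin.sum_univ_three]
  simp [updateCoeff]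
  ring

theorem dotProduct_mulVec_update_sub_eq_sum [DecidableEq n] {Q : Matrix n n R} (hQ : Q.IsSymm)
    (x y : n → R) (i : n) :
    Function.update x i (y i) ⬝ᵥ Q *ᵥ Function.update x i (y i) - x ⬝ᵥ Q *ᵥ x
      = ∑ k, ∑ m : Fin 3, updateCoeff Q x k m * ((if i = k then 1 else 0) * y k ^ (m : ℕ)) := by
  simp [dotProduct_mulVec_update_sub hQ, mul_ite, ite_mul, Finset.sum_ite_irrel]

theorem sum_updateCoeff_zero_add_two (Q : Matrix n n R) (x : n → R) :
    ∑ k, (updateCoeff Q x k 0 + updateCoeff Q x k 2)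
      = Q.trace + ∑ k, Q k k * x k ^ 2 - 2 * (x ⬝ᵥ Q *ᵥ x) := by
  rw [trace, dotProduct, Finset.mul_sum, ← Finset.sum_add_distrib, ← Finset.sum_sub_distrib]
  refine Finset.sum_congr rfl fun k _ => ?_
  simp [updateCoeff]
  ring

theorem dotProduct_mulVec_self_eq_sum (Q : Matrix n n R) (x : n → R) :
    x ⬝ᵥ Q *ᵥ x = ∑ i, ∑ j, Q i j * x i * x j := by
  simp only [dotProduct, mulVec, Finset.mul_sum]
  exact Finset.sum_congr rfl fun i _ => Finset.sum_congr rfl fun j _ => by ring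

theorem dotProduct_diagonal_mulVec_self [DecidableEq n] (q x : n → R) :
    x ⬝ᵥ diagonal q *ᵥ x = ∑ i, q i * x i ^ 2 := by
  simp only [dotProduct, mulVec_diagonal]
  exact Finset.sum_congr rfl fun i _ => by ring

end Matrix

namespace ProbabilityTheory

variable {Ω : Type*} {mΩ : MeasurableSpace Ω} {μ : Measure Ω}

theorem indep_sup_left_of_indep_sup_right [IsProbabilityMeasure μ]
    {m₁ m₂ m₃ : MeasurableSpace Ω} (h₁ : m₁ ≤ mΩ) (h₂ : m₂ ≤ mΩ) (h₃ : m₃ ≤ mΩ)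
    (h₁₂₃ : Indep m₁ (m₂ ⊔ m₃) μ) (h₂₃ : Indep m₂ m₃ μ) : Indep (m₁ ⊔ m₂) m₃ μ := by
  rw [Indep_iff] at h₁₂₃ h₂₃
  let p : Set (Set Ω) := {s | ∃ s₁ s₂, MeasurableSet[m₁] s₁ ∧ MeasurableSet[m₂] s₂ ∧ s = s₁ ∩ s₂}
  have hp : m₁ ⊔ m₂ = MeasurableSpace.generateFrom p := by
    refine le_antisymm (sup_le ?_ ?_) (MeasurableSpace.generateFrom_le ?_)
    · exact fun s hs => MeasurableSpace.measurableSet_generateFrom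
        ⟨s, Set.univ, hs, MeasurableSet.univ, (Set.inter_univ s).symm⟩
    · exact fun s hs => MeasurableSpace.measurableSet_generateFrom
        ⟨Set.univ, s, MeasurableSet.univ, hs, (Set.univ_inter s).symm⟩
    · rintro s ⟨s₁, s₂, hs₁, hs₂, rfl⟩
      exact (le_sup_left (b := m₂) _ hs₁).inter (le_sup_right (a := m₁) _ hs₂)
  rw [hp, ← @MeasurableSpace.generateFrom_measurableSet _ m₃]
  refine IndepSets.indep' ?_ (fun s hs => h₃ _ hs) ?_ (fun s hs t ht _ => hs.inter ht) ?_
  · rintro s ⟨s₁, s₂, hs₁, hs₂, rfl⟩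
    exact (h₁ _ hs₁).inter (h₂ _ hs₂)
  · rintro s ⟨s₁, s₂, hs₁, hs₂, rfl⟩ t ⟨t₁, t₂, ht₁, ht₂, rfl⟩ -
    exact ⟨s₁ ∩ t₁, s₂ ∩ t₂, hs₁.inter ht₁, hs₂.inter ht₂, Set.inter_inter_inter_comm _ _ _ _⟩
  · rw [IndepSets_iff]
    rintro s t ⟨s₁, s₂, hs₁, hs₂, rfl⟩ ht
    have hs₂' : MeasurableSet[m₂ ⊔ m₃] s₂ := le_sup_left (b := m₃) _ hs₂
    have hs₂t : MeasurableSet[m₂ ⊔ m₃] (s₂ ∩ t) := hs₂'.inter (le_sup_right (a := m₂) _ ht)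
    rw [Set.inter_assoc, h₁₂₃ _ _ hs₁ hs₂t, h₂₃ _ _ hs₂ ht, h₁₂₃ _ _ hs₁ hs₂', mul_assoc]

theorem IndepFun.prodMk_left_of_prodMk_right [IsProbabilityMeasure μ] {α β γ : Type*}
    [MeasurableSpace α] [MeasurableSpace β] [MeasurableSpace γ] {A : Ω → α} {B : Ω → β}
    {C : Ω → γ} (hA : Measurable A) (hB : Measurable B) (hC : Measurable C)
    (hABC : IndepFun A (fun ω => (B ω, C ω)) μ) (hBC : IndepFun B C μ) :
    IndepFun (fun ω => (A ω, B ω)) C μ := by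
  have hAB : MeasurableSpace.comap (fun ω => (A ω, B ω)) inferInstance = _ :=
    MeasurableSpace.comap_prodMk A B
  have hBC' : MeasurableSpace.comap (fun ω => (B ω, C ω)) inferInstance = _ :=
    MeasurableSpace.comap_prodMk B C
  rw [IndepFun_iff_Indep, hBC'] at hABC
  rw [IndepFun_iff_Indep] at hBC
  rw [IndepFun_iff_Indep, hAB]
  exact indep_sup_left_of_indep_sup_right hA.comap_le hB.comap_le hC.comap_le hABC hBC

theorem iIndepFun.indepFun_sumElim {ι κ β : Type*} [Fintype ι] [Fintype κ] [MeasurableSpace β]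
    {f : ι → Ω → β} {g : κ → Ω → β} (h : iIndepFun (Sum.elim f g) μ)
    (hf : ∀ i, Measurable (f i)) (hg : ∀ j, Measurable (g j)) :
    IndepFun (fun ω i => f i ω) (fun ω j => g j ω) μ := by
  have hfg : ∀ a, Measurable (Sum.elim f g a) := Sum.forall.2 ⟨hf, hg⟩
  have hdisj : Disjoint (Finset.univ.map ⟨Sum.inl, Sum.inl_injective⟩ : Finset (ι ⊕ κ))
      (Finset.univ.map ⟨Sum.inr, Sum.inr_injective⟩) := by
    simp [Finset.disjoint_left]
  exact (h.indepFun_finset _ _ hdisj hfg).comp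
    (measurable_pi_lambda _ fun i => measurable_pi_apply ⟨.inl i, by simp⟩)
    (measurable_pi_lambda _ fun j => measurable_pi_apply ⟨.inr j, by simp⟩)

theorem IndepFun.integral_ite_mul {α : Type*} [MeasurableSpace α] [Countable α]
    [MeasurableSingletonClass α] [DecidableEq α] {I : Ω → α} {X : Ω → ℝ} (hIX : IndepFun I X μ)
    (hI : Measurable I) (hX : Measurable X) (k : α) :
    ∫ ω, (if I ω = k then 1 else 0) * X ω ∂μ = μ.real (I ⁻¹' {k}) * ∫ ω, X ω ∂μ := by
  rw [hIX.integral_fun_comp_mul_comp (f := fun i => if i = k then (1 : ℝ) else 0)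
    (g := fun x => x) hI.aemeasurable hX.aemeasurable
    (measurable_of_countable _).aestronglyMeasurable aestronglyMeasurable_id]
  have hind : (fun ω => if I ω = k then (1 : ℝ) else 0) = (I ⁻¹' {k}).indicator 1 := by
    ext ω
    by_cases h : I ω = k <;> simp [h]
  rw [hind, integral_indicator_one (hI (measurableSet_singleton k))]

theorem condExp_sum_mul_of_indepFun [IsProbabilityMeasure μ] {β γ ι : Type*}
    [MeasurableSpace β] [MeasurableSpace γ] [Fintype ι] {Y : Ω → γ} {Z : Ω → β}
    (hY : Measurable Y) (hZ : Measurable Z) (hYZ : IndepFun Y Z μ) {F : ι → γ → ℝ}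
    {G : ι → β → ℝ} (hF : ∀ i, Measurable (F i)) (hG : ∀ i, Measurable (G i))
    (hFY : ∀ i, Integrable (fun ω => F i (Y ω)) μ)
    (hGZ : ∀ i, Integrable (fun ω => G i (Z ω)) μ) :
    μ[fun ω => ∑ i, G i (Z ω) * F i (Y ω) | MeasurableSpace.comap Z inferInstance]
      =ᵐ[μ] fun ω => ∑ i, G i (Z ω) * ∫ ω', F i (Y ω') ∂μ := by
  have hint : ∀ i, Integrable (fun ω => G i (Z ω) * F i (Y ω)) μ := fun i =>
    (hYZ.comp (hF i) (hG i)).symm.integrable_mul (hGZ i) (hFY i)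
  have hterm : ∀ i, μ[fun ω => G i (Z ω) * F i (Y ω) | MeasurableSpace.comap Z inferInstance]
      =ᵐ[μ] fun ω => G i (Z ω) * ∫ ω', F i (Y ω') ∂μ := by
    intro i
    have hGm : StronglyMeasurable[MeasurableSpace.comap Z inferInstance] (fun ω => G i (Z ω)) :=
      ((hG i).comp (comap_measurable Z)).stronglyMeasurable
    have hFm : StronglyMeasurable[MeasurableSpace.comap Y inferInstance] (fun ω => F i (Y ω)) :=
      ((hF i).comp (comap_measurable Y)).stronglyMeasurable
    filter_upwards [condExp_mul_of_stronglyMeasurable_left hGm (hint i) (hFY i),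
      condExp_indep_eq hY.comap_le hZ.comap_le hFm ((IndepFun_iff_Indep _ _ _).1 hYZ)]
      with ω h₁ h₂
    exact h₁.trans (by rw [Pi.mul_apply, h₂])
  have hsum : (fun ω => ∑ i, G i (Z ω) * F i (Y ω)) = ∑ i, fun ω => G i (Z ω) * F i (Y ω) :=
    (Finset.sum_fn _ _).symm
  filter_upwards [condExp_finsetSum (fun i _ => hint i) _, ae_all_iff.2 hterm] with ω h₁ h₂
  rw [hsum, h₁, Finset.sum_apply]
  exact Finset.sum_congr rfl fun i _ => h₂ i

end ProbabilityTheory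

section Integrability

variable {Ω : Type*} {mΩ : MeasurableSpace Ω} {μ : Measure Ω} [IsFiniteMeasure μ]

theorem MeasureTheory.MemLp.integrable_pow_of_le_two {X : Ω → ℝ} (hX : MemLp X 2 μ) {m : ℕ}
    (hm : m ≤ 2) :
    Integrable (fun ω => X ω ^ m) μ := by
  interval_cases m
  · simp
  · simpa using hX.integrable one_le_two
  · exact hX.integrable_sq

theorem integrable_updateCoeff {n : Type*} [Fintype n] {Z : Ω → n → ℝ}
    (hZ : ∀ i, MemLp (fun ω => Z ω i) 2 μ) (Q : Matrix n n ℝ) (k : n) (m : Fin 3) :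
    Integrable (fun ω => updateCoeff Q (Z ω) k m) μ := by
  have hQZ : MemLp (fun ω => (Q *ᵥ Z ω) k) 2 μ := by
    simpa only [mulVec, dotProduct] using
      memLp_finsetSum Finset.univ fun j _ => (hZ j).const_mul (Q k j)
  fin_cases m
  · exact ((hZ k).integrable_sq.const_mul _).sub (((hZ k).const_mul 2).integrable_mul hQZ)
  · exact ((hQZ.sub ((hZ k).const_mul _)).const_mul 2).integrable one_le_two
  · exact integrable_const _

end Integrability

theorem condExp_dotProduct_mulVec_update_sub {Ω : Type*} [MeasurableSpace Ω] {μ : Measure Ω}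
    [IsProbabilityMeasure μ] {d : ℕ} {Q : Matrix (Fin d) (Fin d) ℝ} (hQ : Q.IsSymm)
    {Z Z' : Ω → Fin d → ℝ} {I : Ω → Fin d} (hZ : Measurable Z) (hZ' : Measurable Z')
    (hI : Measurable I) (hIZ'Z : IndepFun (fun ω => (I ω, Z' ω)) Z μ) (hIZ' : IndepFun I Z' μ)
    (hunif : ∀ k, μ (I ⁻¹' {k}) = (d : ℝ≥0∞)⁻¹)
    (hZL2 : ∀ i, MemLp (fun ω => Z ω i) 2 μ) (hZ'L2 : ∀ i, MemLp (fun ω => Z' ω i) 2 μ)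
    (hZ'mean : ∀ i, ∫ ω, Z' ω i ∂μ = 0) (hZ'var : ∀ i, ∫ ω, Z' ω i ^ 2 ∂μ = 1) :
    μ[fun ω => Function.update (Z ω) (I ω) (Z' ω (I ω)) ⬝ᵥ
          Q *ᵥ Function.update (Z ω) (I ω) (Z' ω (I ω)) - Z ω ⬝ᵥ Q *ᵥ Z ω |
        MeasurableSpace.comap Z inferInstance]
      =ᵐ[μ] fun ω => (Q.trace + ∑ k, Q k k * Z ω k ^ 2 - 2 * (Z ω ⬝ᵥ Q *ᵥ Z ω)) / d := by
  let F : Fin d × Fin 3 → Fin d × (Fin d → ℝ) → ℝ :=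
    fun kn p => (if p.1 = kn.1 then 1 else 0) * p.2 kn.1 ^ (kn.2 : ℕ)
  let G : Fin d × Fin 3 → (Fin d → ℝ) → ℝ := fun kn x => updateCoeff Q x kn.1 kn.2
  have hdecomp : ∀ ω, Function.update (Z ω) (I ω) (Z' ω (I ω)) ⬝ᵥ
        Q *ᵥ Function.update (Z ω) (I ω) (Z' ω (I ω)) - Z ω ⬝ᵥ Q *ᵥ Z ω
      = ∑ kn, G kn (Z ω) * F kn (I ω, Z' ω) := fun ω => by
    rw [dotProduct_mulVec_update_sub_eq_sum hQ, Fintype.sum_prod_type]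
  have hF : ∀ kn, Measurable (F kn) := fun kn =>
    (Measurable.ite (measurable_fst (measurableSet_singleton kn.1)) measurable_const
      measurable_const).mul (((measurable_pi_apply kn.1).comp measurable_snd).pow_const _)
  have hG : ∀ kn, Measurable (G kn) := by
    rintro ⟨k, n⟩
    fin_cases n <;> simp only [G, updateCoeff] <;> fun_prop
  have hFY : ∀ kn, Integrable (fun ω => F kn (I ω, Z' ω)) μ := by
    rintro ⟨k, n⟩
    refine ((hZ'L2 k).integrable_pow_of_le_two (Nat.le_of_lt_succ n.isLt)).bdd_mul (c := 1)
      (Measurable.ite (hI (measurableSet_singleton k)) measurable_const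
        measurable_const).aestronglyMeasurable (ae_of_all _ fun ω => ?_)
    split_ifs <;> simp
  have hmoment : ∀ kn, ∫ ω, F kn (I ω, Z' ω) ∂μ = (d : ℝ)⁻¹ * ![1, 0, 1] kn.2 := by
    rintro ⟨k, n⟩
    have hZ'k : Measurable fun y : Fin d → ℝ => y k ^ (n : ℕ) := by fun_prop
    have hIZ'k : IndepFun I (fun ω => Z' ω k ^ (n : ℕ)) μ := hIZ'.comp measurable_id hZ'k
    rw [hIZ'k.integral_ite_mul hI (hZ'k.comp hZ') k, measureReal_def, hunif, ENNReal.toReal_inv,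
      ENNReal.toReal_natCast]
    fin_cases n <;> simp [hZ'mean, hZ'var]
  rw [funext hdecomp]
  filter_upwards [condExp_sum_mul_of_indepFun (hI.prodMk hZ') hZ hIZ'Z hF hG hFY
    fun kn => integrable_updateCoeff hZL2 Q kn.1 kn.2] with ω h
  rw [h, ← sum_updateCoeff_zero_add_two, Finset.sum_div]
  simp only [hmoment, Fintype.sum_prod_type, Fin.sum_univ_three, G]
  refine Finset.sum_congr rfl fun k _ => ?_
  simp
  ring

theorem stmt15_general {Ω : Type*} [MeasureSpace Ω] [IsProbabilityMeasure (ℙ : Measure Ω)]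
    {d : ℕ}
    (Q : Matrix (Fin d) (Fin d) ℝ) (hQ : Q.IsSymm)
    (ζ ζ' : Fin d → Ω → ℝ) (I : Ω → Fin d)
    (hmeas : ∀ i, Measurable (ζ i)) (hmeas' : ∀ i, Measurable (ζ' i)) (hI : Measurable I)
    -- the 2d variables ζ₁,…,ζ_d,ζ'₁,…,ζ'_d are jointly independent
    (hindep : iIndepFun (Sum.elim ζ ζ') ℙ)
    -- the random index I is independent of (ζ, ζ')
    (hIindep : IndepFun
      (fun ω => ((fun i => ζ i ω, fun i => ζ' i ω) : (Fin d → ℝ) × (Fin d → ℝ))) I ℙ)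
    -- I is uniformly distributed on {1,…,d}
    (hunif : ∀ k : Fin d, ℙ (I ⁻¹' {k}) = (d : ENNReal)⁻¹)
    -- ζ'_i is an independent copy of ζ_i
    (hid : ∀ i, IdentDistrib (ζ i) (ζ' i) ℙ ℙ)
    (hL2 : ∀ i, MemLp (ζ i) 2 ℙ)
    (hmean : ∀ i, ∫ ω, ζ i ω ∂ℙ = 0) (hvar : ∀ i, ∫ ω, (ζ i ω) ^ 2 ∂ℙ = 1)
    (w w' wc wc' : Ω → ℝ)
    (hw : w = fun ω => (∑ i, ∑ j, Q i j * ζ i ω * ζ j ω) - Q.trace)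
    (hwc : wc = fun ω => (∑ i, Q i i * (ζ i ω) ^ 2) - Q.trace)
    (hw' : w' = fun ω => (∑ i, ∑ j, Q i j * (if i = I ω then ζ' i ω else ζ i ω)
        * (if j = I ω then ζ' j ω else ζ j ω)) - Q.trace)
    (hwc' : wc' = fun ω =>
      (∑ i, Q i i * (if i = I ω then ζ' i ω else ζ i ω) ^ 2) - Q.trace) :
    ℙ[w' - w | MeasurableSpace.comap (fun ω (i : Fin d) => ζ i ω) inferInstance]
        =ᵐ[ℙ] (fun ω => -(2 / (d : ℝ)) * w ω + (1 / (d : ℝ)) * wc ω)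
    ∧ ℙ[wc' - wc | MeasurableSpace.comap (fun ω (i : Fin d) => ζ i ω) inferInstance]
        =ᵐ[ℙ] (fun ω => -(1 / (d : ℝ)) * wc ω) := by
  set Z : Ω → Fin d → ℝ := fun ω i => ζ i ω
  set Z' : Ω → Fin d → ℝ := fun ω i => ζ' i ω
  have hZ : Measurable Z := measurable_pi_lambda _ hmeas
  have hZ' : Measurable Z' := measurable_pi_lambda _ hmeas'
  have hIZ'Z : IndepFun (fun ω => (I ω, Z' ω)) Z ℙ :=
    (hIindep.symm.comp measurable_id measurable_swap).prodMk_left_of_prodMk_right hI hZ' hZ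
      (hindep.indepFun_sumElim hmeas hmeas').symm
  have key := fun (P : Matrix (Fin d) (Fin d) ℝ) (hP : P.IsSymm) =>
    condExp_dotProduct_mulVec_update_sub hP hZ hZ' hI hIZ'Z
      (hIindep.symm.comp measurable_id measurable_snd) hunif hL2
      (fun i => (hid i).memLp_snd (hL2 i))
      (fun i => (hid i).integral_eq.symm.trans (hmean i))
      (fun i => ((hid i).comp (measurable_id.pow_const 2)).integral_eq.symm.trans (hvar i))
  have hupdate : ∀ ω i, (if i = I ω then ζ' i ω else ζ i ω)
      = Function.update (Z ω) (I ω) (Z' ω (I ω)) i := fun ω i => by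
    rw [Function.update_apply]; split_ifs with h <;> simp [h, Z, Z']
  subst hw hwc hw' hwc'
  refine ⟨(condExp_congr_ae (.of_forall fun ω => ?_)).trans
      ((key Q hQ).trans (.of_forall fun ω => ?_)),
    (condExp_congr_ae (.of_forall fun ω => ?_)).trans
      ((key _ (isSymm_diagonal fun i => Q i i)).trans (.of_forall fun ω => ?_))⟩
  · simp only [hupdate, Pi.sub_apply, dotProduct_mulVec_self_eq_sum, Z]
    ring
  · simp only [dotProduct_mulVec_self_eq_sum, Z]
    ring
  · simp only [hupdate, Pi.sub_apply, dotProduct_diagonal_mulVec_self, Z]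
    ring
  · simp only [dotProduct_diagonal_mulVec_self, diagonal_apply_eq, trace, diag_apply, Z]
    ring

/-- Linear regression property of the exchangeable pair `(w, w̌) , (w', w̌')`:
`E[w' − w | ζ] = −(2/d) w + (1/d) w̌` and `E[w̌' − w̌ | ζ] = −(1/d) w̌`. -/
theorem stmt15 {Ω : Type*} [MeasureSpace Ω] [IsProbabilityMeasure (ℙ : Measure Ω)]
    {d : ℕ} (hd : 0 < d)
    (Q : Matrix (Fin d) (Fin d) ℝ) (hQ : Q.IsSymm)
    (ζ ζ' : Fin d → Ω → ℝ) (I : Ω → Fin d)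
    (hmeas : ∀ i, Measurable (ζ i)) (hmeas' : ∀ i, Measurable (ζ' i)) (hI : Measurable I)
    -- the 2d variables ζ₁,…,ζ_d,ζ'₁,…,ζ'_d are jointly independent
    (hindep : iIndepFun (Sum.elim ζ ζ') ℙ)
    -- the random index I is independent of (ζ, ζ')
    (hIindep : IndepFun
      (fun ω => ((fun i => ζ i ω, fun i => ζ' i ω) : (Fin d → ℝ) × (Fin d → ℝ))) I ℙ)
    -- I is uniformly distributed on {1,…,d}
    (hunif : ∀ k : Fin d, ℙ (I ⁻¹' {k}) = (d : ENNReal)⁻¹)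
    -- ζ'_i is an independent copy of ζ_i
    (hid : ∀ i, IdentDistrib (ζ i) (ζ' i) ℙ ℙ)
    (hL2 : ∀ i, MemLp (ζ i) 2 ℙ)
    (hmean : ∀ i, ∫ ω, ζ i ω ∂ℙ = 0) (hvar : ∀ i, ∫ ω, (ζ i ω) ^ 2 ∂ℙ = 1)
    (w w' wc wc' : Ω → ℝ)
    (hw : w = fun ω => (∑ i, ∑ j, Q i j * ζ i ω * ζ j ω) - Q.trace)
    (hwc : wc = fun ω => (∑ i, Q i i * (ζ i ω) ^ 2) - Q.trace)
    (hw' : w' = fun ω => (∑ i, ∑ j, Q i j * (if i = I ω then ζ' i ω else ζ i ω)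
        * (if j = I ω then ζ' j ω else ζ j ω)) - Q.trace)
    (hwc' : wc' = fun ω =>
      (∑ i, Q i i * (if i = I ω then ζ' i ω else ζ i ω) ^ 2) - Q.trace) :
    ℙ[w' - w | MeasurableSpace.comap (fun ω (i : Fin d) => ζ i ω) inferInstance]
        =ᵐ[ℙ] (fun ω => -(2 / (d : ℝ)) * w ω + (1 / (d : ℝ)) * wc ω)
    ∧ ℙ[wc' - wc | MeasurableSpace.comap (fun ω (i : Fin d) => ζ i ω) inferInstance]
        =ᵐ[ℙ] (fun ω => -(1 / (d : ℝ)) * wc ω) :=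
  stmt15_general Q hQ ζ ζ' I hmeas hmeas' hI hindep hIindep hunif hid hL2 hmean hvar w w' wc wc' hw
    hwc hw' hwc'
end
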